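/- For all real numbers p, q, let h₁ = −e₁₂ + p(e₁₊+e₁₋) + q(e₂₊+e₂₋) and h₂ = e₁₂ in CGA₊ (the circular translation). Then: (i) h₁ + h̃₁ = 0 and h₁·h̃₁ = 1, so t−h₁ is a motion polynomial; (ii) C = (t−h₁)(t−h₂) is a motion polynomial; (iii) h₁ − h̃₂ = p(e₁₊+e₁₋) + q(e₂₊+e₂₋) satisfies (h₁−h̃₂)·(h₁−h̃₂)~ = 0, hence whenever (p,q) ≠ (0,0) the element h₁ − h̃₂ is a nonzero non-invertible element and the factorization of C is irregular. -/

import Mathlib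

open Polynomial

/-- The quadratic form of signature (4,1) on ℝ⁵ defining conformal geometric algebra. -/
noncomputable def Qcga : QuadraticForm ℝ (Fin 5 → ℝ) :=
  QuadraticMap.weightedSumSquares ℝ (fun i : Fin 5 => if (i : ℕ) = 4 then (-1 : ℝ) else 1)

/-- Conformal geometric algebra CGA = Cl(4,1). -/
abbrev CGA := CliffordAlgebra Qcga

/-- The generators e₁, e₂, e₃, e₊, e₋ of CGA (indexed 0,…,4). -/
noncomputable def eCGA (i : Fin 5) : CGA := CliffordAlgebra.ι Qcga (Pi.single i 1)

/-- Coefficientwise reversion of a polynomial over CGA. -/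
noncomputable def prev (P : Polynomial CGA) : Polynomial CGA :=
  P.sum fun n a => C (CliffordAlgebra.reverse a) * X ^ n

/-- `P` is a motion polynomial: `P·P̃ = P̃·P` is a nonzero real polynomial. -/
def IsMotionPoly (P : Polynomial CGA) : Prop :=
  ∃ p : Polynomial ℝ, p ≠ 0 ∧ P * prev P = p.map (algebraMap ℝ CGA) ∧
    prev P * P = p.map (algebraMap ℝ CGA)

/-!
Both `h₂ = e₁e₂` and `h₁ = (e₂ - p e∞)(e₁ + q e∞)`, where `e∞ = e₊ + e₋` is a null vector
orthogonal to `e₁, e₂`, are products of two orthogonal unit vectors. For orthogonal `x, y` the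
reverse `yx` of `xy` is `-xy`, and always `xy·(xy)~ = Q(x)Q(y)`; hence `t - hᵢ` are motion
polynomials with norm `t² + 1`. Coefficientwise reversion is anti-multiplicative and real
polynomials are central, so products of motion polynomials are motion polynomials. Finally
`h₁ - h̃₂ = h₁ + h₂ = (p e₁ + q e₂) e∞` has norm `Q(p e₁ + q e₂) Q(e∞) = 0`; it is nonzero for
`(p, q) ≠ 0`, and a nonzero element annihilated by its reverse cannot be a unit.
-/

namespace CliffordAlgebra

section CommRing

variable {R M : Type*} [CommRing R] [AddCommGroup M] [Module R M] {Q : QuadraticForm R M}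

theorem reverse_ι_mul_ι (x y : M) : reverse (ι Q x * ι Q y) = ι Q y * ι Q x := by
  rw [reverse.map_mul, reverse_ι, reverse_ι]

theorem ι_mul_ι_mul_reverse (x y : M) :
    ι Q x * ι Q y * reverse (ι Q x * ι Q y) = algebraMap R _ (Q x * Q y) := by
  rw [reverse_ι_mul_ι, mul_assoc, ← mul_assoc (ι Q y), ι_sq_scalar, Algebra.left_comm,
    ι_sq_scalar, ← map_mul, mul_comm]

theorem ι_mul_ι_add_reverse_of_isOrtho {x y : M} (h : Q.IsOrtho x y) :
    ι Q x * ι Q y + reverse (ι Q x * ι Q y) = 0 := by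
  rw [reverse_ι_mul_ι, ι_mul_ι_add_swap_of_isOrtho h]

theorem ι_mul_ι_ne_zero {x y : M} (d : Module.Dual R M) (hx : ι Q x ≠ 0) (hdx : d x = 0)
    (hdy : d y = 1) : ι Q x * ι Q y ≠ 0 := by
  intro h
  have hcontract := congrArg (contractLeft d) h
  rw [contractLeft_ι_mul, contractLeft_ι, hdx, hdy, zero_smul, map_one, mul_one, zero_sub,
    map_zero, neg_eq_zero] at hcontract
  exact hx hcontract

theorem not_isUnit_of_mul_reverse_eq_zero {a : CliffordAlgebra Q} (ha : a ≠ 0)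
    (h : a * reverse a = 0) : ¬IsUnit a := fun hunit =>
  ha <| reverse_involutive.injective <| by rw [(hunit.mul_right_eq_zero).1 h, map_zero]

end CommRing

theorem ι_ne_zero {K V : Type*} [Field K] [Invertible (2 : K)] [AddCommGroup V] [Module K V]
    {Q : QuadraticForm K V} {x : V} (hx : x ≠ 0) : ι Q x ≠ 0 := by
  obtain ⟨d, hd⟩ : ∃ d : Module.Dual K V, d x ≠ 0 := by
    by_contra! h
    exact hx ((Module.forall_dual_apply_eq_zero_iff K x).1 h)
  intro h
  have hcontract := congrArg (contractLeft d) h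
  rw [contractLeft_ι, map_zero, map_eq_zero_iff _ (algebraMap K _).injective] at hcontract
  exact hd hcontract

end CliffordAlgebra

open CliffordAlgebra

theorem prev_coeff (P : CGA[X]) (n : ℕ) : (prev P).coeff n = reverse (P.coeff n) := by
  simp only [prev, Polynomial.sum_def, C_mul_X_pow_eq_monomial, finsetSum_coeff, coeff_monomial,
    Finset.sum_ite_eq']
  exact ite_eq_left_iff.2 fun h => by rw [notMem_support_iff.1 h, map_zero]

theorem prev_mul (P Q : CGA[X]) : prev (P * Q) = prev Q * prev P := by
  ext n
  simp only [prev_coeff, coeff_mul, map_sum, reverse.map_mul]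
  rw [← Finset.Nat.sum_antidiagonal_swap]
  rfl

theorem prev_X_sub_C (h : CGA) : prev (X - C h) = X - C (CliffordAlgebra.reverse h) := by
  ext n
  simp only [prev_coeff, coeff_sub, coeff_X, coeff_C, map_sub, apply_ite CliffordAlgebra.reverse,
    reverse.map_one, map_zero]

theorem Polynomial.commute_map_algebraMap {R A : Type*} [CommSemiring R] [Semiring A]
    [Algebra R A] (f : R[X]) (P : A[X]) : Commute (f.map (algebraMap R A)) P := by
  induction f using Polynomial.induction_on' with
  | add f g hf hg => rw [Polynomial.map_add]; exact hf.add_left hg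
  | monomial n r =>
    rw [map_monomial, ← C_mul_X_pow_eq_monomial, ← Polynomial.algebraMap_apply]
    exact (Algebra.commute_algebraMap_left r P).mul_left ((commute_X P).pow_left n)

theorem IsMotionPoly.mul {P Q : CGA[X]} (hP : IsMotionPoly P) (hQ : IsMotionPoly Q) :
    IsMotionPoly (P * Q) := by
  obtain ⟨f, hf, hPf, hPf'⟩ := hP
  obtain ⟨g, hg, hQg, hQg'⟩ := hQ
  refine ⟨f * g, mul_ne_zero hf hg, ?_, ?_⟩
  · calc P * Q * prev (P * Q) = P * (Q * prev Q) * prev P := by rw [prev_mul]; noncomm_ring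
      _ = g.map (algebraMap ℝ CGA) * (P * prev P) := by
        rw [hQg, (commute_map_algebraMap g P).eq.symm, mul_assoc]
      _ = (f * g).map (algebraMap ℝ CGA) := by rw [hPf, ← Polynomial.map_mul, mul_comm]
  · calc prev (P * Q) * (P * Q) = prev Q * (prev P * P) * Q := by rw [prev_mul]; noncomm_ring
      _ = f.map (algebraMap ℝ CGA) * (prev Q * Q) := by
        rw [hPf', ← (commute_map_algebraMap f (prev Q)).eq, mul_assoc]
      _ = (f * g).map (algebraMap ℝ CGA) := by rw [hQg', Polynomial.map_mul]

theorem Polynomial.X_sub_C_mul_X_sub_C {A : Type*} [Ring A] (a b : A) :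
    (X - C a) * (X - C b) = X ^ 2 - C (a + b) * X + C (a * b) := by
  rw [sub_mul, mul_sub, mul_sub, X_mul_C, C_add, C_mul, sq]
  noncomm_ring

theorem isMotionPoly_X_sub_C {h : CGA} {s r : ℝ} (hs : h + reverse h = algebraMap ℝ CGA s)
    (hr : h * reverse h = algebraMap ℝ CGA r) : IsMotionPoly (X - C h) := by
  have hr' : reverse h * h = algebraMap ℝ CGA r := by
    rw [eq_sub_of_add_eq' hs, sub_mul, Algebra.commutes, ← mul_sub, ← eq_sub_of_add_eq' hs, hr]
  refine ⟨X ^ 2 - C s * X + C r, fun h0 => by simpa using congrArg (coeff · 2) h0, ?_, ?_⟩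
  · rw [prev_X_sub_C, X_sub_C_mul_X_sub_C, hs, hr]; simp
  · rw [prev_X_sub_C, X_sub_C_mul_X_sub_C, add_comm (CliffordAlgebra.reverse h), hs, hr']; simp

namespace CGA

theorem Qcga_apply (v : Fin 5 → ℝ) :
    Qcga v = v 0 ^ 2 + v 1 ^ 2 + v 2 ^ 2 + v 3 ^ 2 - v 4 ^ 2 := by
  simp [Qcga, QuadraticMap.weightedSumSquares_apply, Fin.sum_univ_five, sq, ← sub_eq_add_neg]

noncomputable def einf : Fin 5 → ℝ := Pi.single 3 1 + Pi.single 4 1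

theorem ι_einf : ι Qcga einf = eCGA 3 + eCGA 4 := map_add _ _ _

theorem eCGA_mul_eCGA_of_ne {i j : Fin 5} (hij : i ≠ j) :
    eCGA i * eCGA j = -(eCGA j * eCGA i) :=
  ι_mul_ι_comm_of_isOrtho <| by
    rw [QuadraticMap.isOrtho_def, Qcga_apply, Qcga_apply, Qcga_apply]
    fin_cases i <;> fin_cases j <;> simp at hij ⊢

theorem ι_einf_sq : ι Qcga einf * ι Qcga einf = 0 := by
  rw [ι_sq_scalar, Qcga_apply]; simp [einf]

theorem ι_single (i : Fin 5) : ι Qcga (Pi.single i 1) = eCGA i := rfl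

theorem ι_einf_mul_eCGA {i : Fin 5} (h3 : i ≠ 3) (h4 : i ≠ 4) :
    ι Qcga einf * eCGA i = -(eCGA i * ι Qcga einf) := by
  rw [ι_einf, add_mul, mul_add, eCGA_mul_eCGA_of_ne h3.symm, eCGA_mul_eCGA_of_ne h4.symm, neg_add]

theorem eCGA_mul_add_eCGA_mul (i : Fin 5) :
    eCGA i * eCGA 3 + eCGA i * eCGA 4 = eCGA i * ι Qcga einf := by
  rw [ι_einf, mul_add]

theorem circularTranslation_eq_ι_mul_ι (p q : ℝ) :
    -(eCGA 0 * eCGA 1) + p • (eCGA 0 * eCGA 3 + eCGA 0 * eCGA 4) +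
      q • (eCGA 1 * eCGA 3 + eCGA 1 * eCGA 4) =
      ι Qcga (Pi.single 1 1 - p • einf) * ι Qcga (Pi.single 0 1 + q • einf) := by
  simp only [eCGA_mul_add_eCGA_mul, map_sub, map_add, map_smul, ι_single, sub_mul, mul_add,
    smul_mul_assoc, mul_smul_comm]
  rw [eCGA_mul_eCGA_of_ne (by decide : (1 : Fin 5) ≠ 0), ι_einf_mul_eCGA (by decide) (by decide),
    ι_einf_sq]
  module

theorem ι_mul_ι_einf (p q : ℝ) :
    ι Qcga (p • Pi.single 0 1 + q • Pi.single 1 1) * ι Qcga einf =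
      p • (eCGA 0 * eCGA 3 + eCGA 0 * eCGA 4) + q • (eCGA 1 * eCGA 3 + eCGA 1 * eCGA 4) := by
  simp only [eCGA_mul_add_eCGA_mul, map_add, map_smul, ι_single, add_mul, smul_mul_assoc]

end CGA

open CGA

/-- the circular translation: for all reals `p, q`, with
`h₁ = −e₁₂ + p(e₁₊+e₁₋) + q(e₂₊+e₂₋)` and `h₂ = e₁₂`:
(i) `h₁ + h̃₁ = 0` and `h₁·h̃₁ = 1`, so `t−h₁` is a motion polynomial;
(ii) `C = (t−h₁)(t−h₂)` is a motion polynomial;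
(iii) `h₁ − h̃₂ = p(e₁₊+e₁₋) + q(e₂₊+e₂₋)` satisfies `(h₁−h̃₂)·(h₁−h̃₂)̃ = 0`,
hence whenever `(p,q) ≠ (0,0)` the element `h₁ − h̃₂` is a nonzero non-invertible
element and the factorization of `C` is irregular. -/
theorem stmt12 (p q : ℝ) :
    let h₁ : CGA := -(eCGA 0 * eCGA 1) + p • (eCGA 0 * eCGA 3 + eCGA 0 * eCGA 4) +
      q • (eCGA 1 * eCGA 3 + eCGA 1 * eCGA 4)
    let h₂ : CGA := eCGA 0 * eCGA 1
    (h₁ + CliffordAlgebra.reverse h₁ = 0) ∧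
    (h₁ * CliffordAlgebra.reverse h₁ = 1) ∧
    IsMotionPoly (X - C h₁) ∧
    IsMotionPoly ((X - C h₁) * (X - C h₂)) ∧
    (h₁ - CliffordAlgebra.reverse h₂
      = p • (eCGA 0 * eCGA 3 + eCGA 0 * eCGA 4) + q • (eCGA 1 * eCGA 3 + eCGA 1 * eCGA 4)) ∧
    ((h₁ - CliffordAlgebra.reverse h₂) *
      CliffordAlgebra.reverse (h₁ - CliffordAlgebra.reverse h₂) = 0) ∧
    (¬ (p = 0 ∧ q = 0) →
      h₁ - CliffordAlgebra.reverse h₂ ≠ 0 ∧ ¬ IsUnit (h₁ - CliffordAlgebra.reverse h₂)) := by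
  intro h₁ h₂
  have h₁_eq : h₁ = ι Qcga (Pi.single 1 1 - p • einf) * ι Qcga (Pi.single 0 1 + q • einf) :=
    circularTranslation_eq_ι_mul_ι p q
  have h₂_eq : h₂ = ι Qcga (Pi.single 0 1) * ι Qcga (Pi.single 1 1) := rfl
  have hsum₁ : h₁ + reverse h₁ = 0 := h₁_eq ▸ ι_mul_ι_add_reverse_of_isOrtho (by
    rw [QuadraticMap.isOrtho_def, Qcga_apply, Qcga_apply, Qcga_apply]; simp [einf])
  have hnorm₁ : h₁ * reverse h₁ = 1 := by
    rw [h₁_eq, ι_mul_ι_mul_reverse, Qcga_apply, Qcga_apply]; simp [einf]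
  have hsum₂ : h₂ + reverse h₂ = 0 := h₂_eq ▸ ι_mul_ι_add_reverse_of_isOrtho (by
    rw [QuadraticMap.isOrtho_def, Qcga_apply, Qcga_apply, Qcga_apply]; simp)
  have hnorm₂ : h₂ * reverse h₂ = 1 := by
    rw [h₂_eq, ι_mul_ι_mul_reverse, Qcga_apply, Qcga_apply]; simp
  have hdiff : h₁ - reverse h₂ = ι Qcga (p • Pi.single 0 1 + q • Pi.single 1 1) * ι Qcga einf := by
    rw [ι_mul_ι_einf, eq_neg_of_add_eq_zero_right hsum₂, sub_neg_eq_add]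
    simp only [h₁, h₂]; abel
  have hnull : (h₁ - reverse h₂) * reverse (h₁ - reverse h₂) = 0 := by
    rw [hdiff, ι_mul_ι_mul_reverse, Qcga_apply einf]; simp [einf]
  have motion₁ :=
    isMotionPoly_X_sub_C (hsum₁.trans (map_zero _).symm) (hnorm₁.trans (map_one _).symm)
  have motion₂ :=
    isMotionPoly_X_sub_C (hsum₂.trans (map_zero _).symm) (hnorm₂.trans (map_one _).symm)
  refine ⟨hsum₁, hnorm₁, motion₁, motion₁.mul motion₂, hdiff.trans (ι_mul_ι_einf p q), hnull,
    fun hpq => ?_⟩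
  have hy : p • Pi.single 0 1 + q • Pi.single 1 1 ≠ (0 : Fin 5 → ℝ) := fun h =>
    hpq ⟨by simpa using congrFun h 0, by simpa using congrFun h 1⟩
  have hne : h₁ - reverse h₂ ≠ 0 := hdiff ▸
    ι_mul_ι_ne_zero (LinearMap.proj 3) (ι_ne_zero hy) (by simp) (by simp [einf])
  exact ⟨hne, not_isUnit_of_mul_reverse_eq_zero hne hnull⟩
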